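/- arXiv:1005.0177 — 12 statements merged into one kernel-verified Lean document; each statement's English description precedes it below -/
import Mathlib

section
/- Let 𝔅 be the ℚ-linear span, inside the field of formal Laurent series ℚ((T)), of the set of elements T^m · (𝐁(bT))^n · e^{aT}, where m ranges over the integers, n over the non-negative integers, a over ℚ, and b over the nonzero rationals. Then 𝔅 is closed under multiplication: if f, g ∈ 𝔅 then f·g ∈ 𝔅 (so 𝔅 is a subring of ℚ((T)) since it contains 1). -/
open PowerSeries

/-- The generators `T^m · 𝐁(bT)^n · e^{aT}` of `𝔅`, viewed inside the field of
Laurent series `ℚ((T))`: here `m : ℤ`, `n : ℕ`, `a b : ℚ` with `b ≠ 0`. -/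
noncomputable def frakBGens : Set (LaurentSeries ℚ) :=
  { x | ∃ (m : ℤ) (n : ℕ) (a b : ℚ), b ≠ 0 ∧
      x = (HahnSeries.single m (1 : ℚ)) *
        (HahnSeries.ofPowerSeries ℤ ℚ
          ((rescale b (bernoulliPowerSeries ℚ)) ^ n * rescale a (exp ℚ))) }

/-- `𝔅` is the `ℚ`-linear span of the generators inside `ℚ((T))`. -/
noncomputable def frakB : Submodule ℚ (LaurentSeries ℚ) := Submodule.span ℚ frakBGens

section Aux

open Finset

/-- `e^{aT}`. -/
noncomputable abbrev EE (a : ℚ) : PowerSeries ℚ := rescale a (exp ℚ)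

/-- `𝐁(bT)`. -/
noncomputable abbrev BB (b : ℚ) : PowerSeries ℚ := rescale b (bernoulliPowerSeries ℚ)

lemma EE_mul (a a' : ℚ) : EE a * EE a' = EE (a + a') := exp_mul_exp_eq_exp_add a a'

lemma EE_zero : EE 0 = 1 := by
  simp [EE, rescale_zero, constantCoeff_exp]

lemma EE_pow (a : ℚ) (n : ℕ) : EE a ^ n = EE (n * a) := by
  induction n with
  | zero => simp [EE_zero]
  | succ n ih =>
      rw [pow_succ, ih, EE_mul]
      push_cast
      ring_nf

lemma EE_sub_one_ne_zero {a : ℚ} (ha : a ≠ 0) : EE a - 1 ≠ 0 := by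
  intro h
  have h1 := congrArg (coeff 1) h
  simp [EE, coeff_exp, coeff_one] at h1
  exact ha h1

lemma BB_mul_key (b : ℚ) : BB b * (EE b - 1) = C b * X := by
  have h : BB b * (EE b - 1) = rescale b (bernoulliPowerSeries ℚ * (exp ℚ - 1)) := by
    rw [map_mul, map_sub, map_one]
  rw [h, bernoulliPowerSeries_mul_exp_sub_one, rescale_X]

lemma BB_expand (b : ℚ) (k : ℕ) (h : (k : ℚ) * b ≠ 0) :
    C (k : ℚ) * BB b = (∑ i ∈ range k, EE ((i : ℚ) * b)) * BB ((k : ℚ) * b) := by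
  apply mul_right_cancel₀ (EE_sub_one_ne_zero h)
  have hgeom : (∑ i ∈ range k, EE ((i : ℚ) * b)) * (EE b - 1) = EE ((k : ℚ) * b) - 1 := by
    simpa [EE_pow] using geom_sum_mul (EE b) k
  calc C (k : ℚ) * BB b * (EE ((k : ℚ) * b) - 1)
      = C (k : ℚ) * (BB b * (EE b - 1)) * (∑ i ∈ range k, EE ((i : ℚ) * b)) := by
        rw [← hgeom]; ring
    _ = (∑ i ∈ range k, EE ((i : ℚ) * b)) * (C ((k : ℚ) * b) * X) := by
        rw [BB_mul_key, map_mul]; ring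
    _ = (∑ i ∈ range k, EE ((i : ℚ) * b)) * (BB ((k : ℚ) * b) * (EE ((k : ℚ) * b) - 1)) := by
        rw [BB_mul_key]
    _ = (∑ i ∈ range k, EE ((i : ℚ) * b)) * BB ((k : ℚ) * b) * (EE ((k : ℚ) * b) - 1) := by
        ring

lemma BB_neg (b : ℚ) (hb : b ≠ 0) : BB (-b) = EE b * BB b := by
  apply mul_right_cancel₀ (EE_sub_one_ne_zero (neg_ne_zero.mpr hb))
  rw [BB_mul_key]
  calc C (-b) * X = -(C b * X) := by rw [map_neg]; ring
    _ = -(BB b * (EE b - 1)) := by rw [BB_mul_key]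
    _ = BB b * (1 - EE b) := by ring
    _ = BB b * (EE b * EE (-b) - EE b) := by rw [EE_mul, add_neg_cancel, EE_zero]
    _ = EE b * BB b * (EE (-b) - 1) := by ring

/-- The span of the exponentials `e^{aT}` inside `ℚ[[T]]`. -/
noncomputable def Mexp : Submodule ℚ (PowerSeries ℚ) :=
  Submodule.span ℚ {x | ∃ a : ℚ, x = EE a}

lemma EE_mem_Mexp (a : ℚ) : EE a ∈ Mexp := Submodule.subset_span ⟨a, rfl⟩

lemma Mexp_mul_left (a : ℚ) {t : PowerSeries ℚ} (ht : t ∈ Mexp) : EE a * t ∈ Mexp := by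
  induction ht using Submodule.span_induction with
  | mem x hx => obtain ⟨a', rfl⟩ := hx; rw [EE_mul]; exact EE_mem_Mexp _
  | zero => simp
  | add x y _ _ hx hy => rw [mul_add]; exact add_mem hx hy
  | smul c x _ hx => rw [mul_smul_comm]; exact Submodule.smul_mem _ _ hx

lemma Mexp_mul {s t : PowerSeries ℚ} (hs : s ∈ Mexp) (ht : t ∈ Mexp) : s * t ∈ Mexp := by
  induction hs using Submodule.span_induction with
  | mem x hx => obtain ⟨a, rfl⟩ := hx; exact Mexp_mul_left a ht
  | zero => simp
  | add x y _ _ hx hy => rw [add_mul]; exact add_mem hx hy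
  | smul c x _ hx => rw [smul_mul_assoc]; exact Submodule.smul_mem _ _ hx

lemma Mexp_pow {s : PowerSeries ℚ} (hs : s ∈ Mexp) (n : ℕ) : s ^ n ∈ Mexp := by
  induction n with
  | zero => rw [pow_zero, ← EE_zero]; exact EE_mem_Mexp 0
  | succ n ih => rw [pow_succ]; exact Mexp_mul ih hs

lemma LS_mul_smul (c : ℚ) (x y : LaurentSeries ℚ) : x * (c • y) = c • (x * y) := by
  rw [← HahnSeries.C_mul_eq_smul, ← HahnSeries.C_mul_eq_smul]; ring

lemma LS_smul_mul (c : ℚ) (x y : LaurentSeries ℚ) : (c • x) * y = c • (x * y) := by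
  rw [← HahnSeries.C_mul_eq_smul, ← HahnSeries.C_mul_eq_smul]; ring

/-- Abbreviation for the embedding of power series into Laurent series. -/
noncomputable abbrev φLS : PowerSeries ℚ →+* LaurentSeries ℚ := HahnSeries.ofPowerSeries ℤ ℚ

lemma gen_mem (m : ℤ) (n : ℕ) (a : ℚ) {b : ℚ} (hb : b ≠ 0) :
    (HahnSeries.single m (1 : ℚ)) * φLS (BB b ^ n * EE a) ∈ frakB :=
  Submodule.subset_span ⟨m, n, a, b, hb, rfl⟩

lemma mem_step {s : PowerSeries ℚ} (hs : s ∈ Mexp) (m : ℤ) (N : ℕ) {b : ℚ} (hb : b ≠ 0)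
    (a : ℚ) :
    (HahnSeries.single m (1 : ℚ)) * φLS (s * (BB b ^ N * EE a)) ∈ frakB := by
  induction hs using Submodule.span_induction with
  | mem x hx =>
      obtain ⟨a', rfl⟩ := hx
      have h : EE a' * (BB b ^ N * EE a) = BB b ^ N * EE (a + a') := by
        rw [← EE_mul]; ring
      rw [h]; exact gen_mem m N (a + a') hb
  | zero => rw [zero_mul, map_zero, mul_zero]; exact zero_mem _
  | add x y _ _ hx hy => rw [add_mul, map_add, mul_add]; exact add_mem hx hy
  | smul c x _ hx =>
      rw [smul_mul_assoc, PowerSeries.smul_eq_C_mul, map_mul, HahnSeries.ofPowerSeries_C,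
        HahnSeries.C_mul_eq_smul, LS_mul_smul]
      exact Submodule.smul_mem _ _ hx

lemma common_multiple {b1 b2 : ℚ} (h1 : 0 < b1) (h2 : 0 < b2) :
    ∃ k1 k2 : ℕ, (k1 : ℚ) * b1 ≠ 0 ∧ (k2 : ℚ) * b2 ≠ 0 ∧ (k1 : ℚ) * b1 = (k2 : ℚ) * b2 := by
  refine ⟨b2.num.natAbs * b1.den, b1.num.natAbs * b2.den, ?_, ?_, ?_⟩
  · positivity
  · positivity
  · have e1 : ((b1.num.natAbs : ℕ) : ℚ) = (b1.num : ℚ) := by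
      rw [Nat.cast_natAbs]
      exact_mod_cast abs_of_nonneg (Rat.num_pos.mpr h1).le
    have e2 : ((b2.num.natAbs : ℕ) : ℚ) = (b2.num : ℚ) := by
      rw [Nat.cast_natAbs]
      exact_mod_cast abs_of_nonneg (Rat.num_pos.mpr h2).le
    have d1 : (b1.den : ℚ) * b1 = (b1.num : ℚ) := by
      rw [mul_comm, Rat.mul_den_eq_num]
    have d2 : (b2.den : ℚ) * b2 = (b2.num : ℚ) := by
      rw [mul_comm, Rat.mul_den_eq_num]
    push_cast
    rw [e1, e2]
    calc (b2.num : ℚ) * b1.den * b1 = (b2.num : ℚ) * ((b1.den : ℚ) * b1) := by ring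
      _ = (b2.num : ℚ) * b1.num := by rw [d1]
      _ = (b1.num : ℚ) * ((b2.den : ℚ) * b2) := by rw [d2]; ring
      _ = (b1.num : ℚ) * b2.den * b2 := by ring

lemma prod_mem_pos {b1 b2 : ℚ} (h1 : 0 < b1) (h2 : 0 < b2) (n1 n2 : ℕ) (a : ℚ) (m : ℤ) :
    (HahnSeries.single m (1 : ℚ)) * φLS (BB b1 ^ n1 * BB b2 ^ n2 * EE a) ∈ frakB := by
  obtain ⟨k1, k2, hk1, hk2, heq⟩ := common_multiple h1 h2
  have hlne : (k1 : ℚ) * b1 ≠ 0 := hk1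
  set S1 := ∑ i ∈ range k1, EE ((i : ℚ) * b1) with hS1
  set S2 := ∑ i ∈ range k2, EE ((i : ℚ) * b2) with hS2
  have e1 : C (k1 : ℚ) * BB b1 = S1 * BB ((k1 : ℚ) * b1) := BB_expand b1 k1 hk1
  have e2 : C (k2 : ℚ) * BB b2 = S2 * BB ((k1 : ℚ) * b1) := by
    rw [heq]; exact BB_expand b2 k2 hk2
  have p1 : (C (k1 : ℚ)) ^ n1 * BB b1 ^ n1 = S1 ^ n1 * BB ((k1 : ℚ) * b1) ^ n1 := by
    rw [← mul_pow, ← mul_pow, e1]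
  have p2 : (C (k2 : ℚ)) ^ n2 * BB b2 ^ n2 = S2 ^ n2 * BB ((k1 : ℚ) * b1) ^ n2 := by
    rw [← mul_pow, ← mul_pow, e2]
  have E : C ((k1 : ℚ) ^ n1 * (k2 : ℚ) ^ n2) * (BB b1 ^ n1 * BB b2 ^ n2 * EE a)
      = (S1 ^ n1 * S2 ^ n2) * (BB ((k1 : ℚ) * b1) ^ (n1 + n2) * EE a) := by
    calc C ((k1 : ℚ) ^ n1 * (k2 : ℚ) ^ n2) * (BB b1 ^ n1 * BB b2 ^ n2 * EE a)
        = ((C (k1 : ℚ)) ^ n1 * BB b1 ^ n1) * ((C (k2 : ℚ)) ^ n2 * BB b2 ^ n2) * EE a := by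
          rw [map_mul, map_pow, map_pow]; ring
      _ = (S1 ^ n1 * BB ((k1 : ℚ) * b1) ^ n1) * (S2 ^ n2 * BB ((k1 : ℚ) * b1) ^ n2) * EE a := by rw [p1, p2]
      _ = (S1 ^ n1 * S2 ^ n2) * (BB ((k1 : ℚ) * b1) ^ (n1 + n2) * EE a) := by rw [pow_add]; ring
  have hsm : S1 ^ n1 * S2 ^ n2 ∈ Mexp :=
    Mexp_mul (Mexp_pow (sum_mem fun i _ => EE_mem_Mexp _) n1)
      (Mexp_pow (sum_mem fun i _ => EE_mem_Mexp _) n2)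
  have hmem := mem_step hsm m (n1 + n2) hlne a
  rw [← E, map_mul, HahnSeries.ofPowerSeries_C, HahnSeries.C_mul_eq_smul, LS_mul_smul]
    at hmem
  have hc : ((k1 : ℚ) ^ n1 * (k2 : ℚ) ^ n2) ≠ 0 :=
    mul_ne_zero (pow_ne_zero _ (left_ne_zero_of_mul hk1))
      (pow_ne_zero _ (left_ne_zero_of_mul hk2))
  have h' := Submodule.smul_mem frakB ((k1 : ℚ) ^ n1 * (k2 : ℚ) ^ n2)⁻¹ hmem
  rwa [inv_smul_smul₀ hc] at h'

lemma BB_pow_reduce {b : ℚ} (hb : b ≠ 0) (n : ℕ) :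
    ∃ c a' : ℚ, 0 < c ∧ BB b ^ n = EE a' * BB c ^ n := by
  rcases lt_or_gt_of_ne hb with h | h
  · refine ⟨-b, (n : ℚ) * (-b), by linarith, ?_⟩
    have h1 : BB b = EE (-b) * BB (-b) := by
      have h2 := BB_neg (-b) (by intro h0; apply hb; linarith)
      rwa [neg_neg] at h2
    rw [h1, mul_pow, EE_pow]
  · exact ⟨b, 0, h, by rw [EE_zero, one_mul]⟩

lemma BB_prod_mem {b1 b2 : ℚ} (hb1 : b1 ≠ 0) (hb2 : b2 ≠ 0) (n1 n2 : ℕ) (a : ℚ) (m : ℤ) :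
    (HahnSeries.single m (1 : ℚ)) * φLS (BB b1 ^ n1 * BB b2 ^ n2 * EE a) ∈ frakB := by
  obtain ⟨c1, a1, hc1, r1⟩ := BB_pow_reduce hb1 n1
  obtain ⟨c2, a2, hc2, r2⟩ := BB_pow_reduce hb2 n2
  have key : BB b1 ^ n1 * BB b2 ^ n2 * EE a
      = BB c1 ^ n1 * BB c2 ^ n2 * EE (a1 + (a2 + a)) := by
    rw [r1, r2, ← EE_mul, ← EE_mul]; ring
  rw [key]
  exact prod_mem_pos hc1 hc2 n1 n2 _ m

end Aux

/-- `𝔅` is closed under multiplication (hence is a subring of `ℚ((T))`). -/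
theorem frakB_mul_mem {f g : LaurentSeries ℚ} (hf : f ∈ frakB) (hg : g ∈ frakB) :
    f * g ∈ frakB := by
  induction hf using Submodule.span_induction with
  | mem x hx =>
      induction hg using Submodule.span_induction with
      | mem y hy =>
          obtain ⟨m1, n1, a1, b1, hb1, rfl⟩ := hx
          obtain ⟨m2, n2, a2, b2, hb2, rfl⟩ := hy
          rw [mul_mul_mul_comm, HahnSeries.single_mul_single, one_mul, ← map_mul]
          have harg : (BB b1 ^ n1 * EE a1) * (BB b2 ^ n2 * EE a2)
              = BB b1 ^ n1 * BB b2 ^ n2 * EE (a1 + a2) := by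
            rw [← EE_mul]; ring
          rw [harg]
          exact BB_prod_mem hb1 hb2 n1 n2 (a1 + a2) (m1 + m2)
      | zero => rw [mul_zero]; exact zero_mem _
      | add y z _ _ hy hz => rw [mul_add]; exact add_mem hy hz
      | smul c y _ hy => rw [LS_mul_smul]; exact Submodule.smul_mem _ _ hy
  | zero => rw [zero_mul]; exact zero_mem _
  | add x y _ _ hx hy => rw [add_mul]; exact add_mem hx hy
  | smul c x _ hx => rw [LS_smul_mul]; exact Submodule.smul_mem _ _ hx
end

section
/- For every non-negative integer n and all a, b ∈ ℚ, the following identity of formal power series holds in ℚ[[T]]: T · (d/dT)((𝐁(bT))^n · e^{aT}) = (aT + n − nbT) · (𝐁(bT))^n · e^{aT} − n · (𝐁(bT))^{n+1} · e^{aT}, where d/dT is the formal derivative of power series. -/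
open PowerSeries

lemma derivative_rescale (c : ℚ) (f : ℚ⟦X⟧) :
    PowerSeries.derivative ℚ (rescale c f) = C c * rescale c (PowerSeries.derivative ℚ f) := by
  ext n
  simp [coeff_derivative, coeff_rescale, coeff_C_mul, pow_succ]
  ring

lemma derivative_exp' (a : ℚ) :
    PowerSeries.derivative ℚ (rescale a (exp ℚ)) = C a * rescale a (exp ℚ) := by
  rw [derivative_rescale]
  congr 1
  congr 1
  ext n
  simp [coeff_derivative, coeff_exp]
  field_simp
  push_cast [Nat.factorial_succ]
  ring

lemma bernoulli_rescale_deriv (b : ℚ) :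
    X * PowerSeries.derivative ℚ (rescale b (bernoulliPowerSeries ℚ)) =
      (1 - C b * X) * rescale b (bernoulliPowerSeries ℚ)
        - (rescale b (bernoulliPowerSeries ℚ)) ^ 2 := by
  rcases eq_or_ne b 0 with rfl | hb
  · simp [rescale_zero, bernoulliPowerSeries, constantCoeff_mk]
  have key : rescale b (bernoulliPowerSeries ℚ) * (rescale b (exp ℚ) - 1) = C b * X := by
    have := congrArg (rescale b) (bernoulliPowerSeries_mul_exp_sub_one ℚ)
    simpa [map_mul, map_sub, map_one, rescale_X] using this
  have hEne : rescale b (exp ℚ) - 1 ≠ 0 := by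
    intro h
    have := congrArg (coeff 1) h
    simp [coeff_rescale, coeff_exp, coeff_one] at this
    exact hb this
  have hd : rescale b (bernoulliPowerSeries ℚ) * (C b * rescale b (exp ℚ))
      + (rescale b (exp ℚ) - 1) * PowerSeries.derivative ℚ (rescale b (bernoulliPowerSeries ℚ))
      = C b := by
    have h2 := congrArg (PowerSeries.derivative ℚ) key
    rw [Derivation.leibniz] at h2
    simp only [map_sub, derivative_exp', map_one, map_zero, sub_zero, smul_eq_mul,
      derivative_C, Derivation.map_one_eq_zero, Derivation.leibniz, derivative_X, smul_eq_mul, mul_one, mul_zero,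
      add_zero, zero_add, zero_mul] at h2
    linear_combination h2
  apply mul_right_cancel₀ hEne
  linear_combination X * hd + (rescale b (bernoulliPowerSeries ℚ) - 1) * key

/-- For every `n : ℕ` and `a b : ℚ`, in `ℚ[[T]]` :
`T · d/dT(𝐁(bT)^n · e^{aT}) = (aT + n − nbT) · 𝐁(bT)^n · e^{aT} − n · 𝐁(bT)^{n+1} · e^{aT}`. -/
theorem lucas_derivative_formula (n : ℕ) (a b : ℚ) :
    X * (PowerSeries.derivative ℚ
        ((rescale b (bernoulliPowerSeries ℚ)) ^ n * rescale a (exp ℚ))) =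
      (C a * X + (n : ℚ⟦X⟧) - (n : ℚ⟦X⟧) * C b * X) *
          ((rescale b (bernoulliPowerSeries ℚ)) ^ n * rescale a (exp ℚ)) -
        (n : ℚ⟦X⟧) * ((rescale b (bernoulliPowerSeries ℚ)) ^ (n + 1) * rescale a (exp ℚ)) := by
  induction n with
  | zero =>
    simp only [pow_zero, one_mul, Nat.cast_zero, zero_mul, sub_zero, add_zero, mul_zero]
    rw [derivative_exp']
    ring
  | succ n ih =>
    have hU := bernoulli_rescale_deriv b
    rw [pow_succ, mul_comm ((rescale b (bernoulliPowerSeries ℚ)) ^ n)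
      (rescale b (bernoulliPowerSeries ℚ)), mul_assoc, Derivation.leibniz, smul_eq_mul, smul_eq_mul]
    push_cast
    linear_combination ((rescale b (bernoulliPowerSeries ℚ)) ^ n * rescale a (exp ℚ)) * hU
      + rescale b (bernoulliPowerSeries ℚ) * ih
end

section
/- For every positive integer n, the following identity of formal power series holds in ℚ[[T]]: Σ_{i=0}^{n−1} 𝐁(nT) · (e^T)^i = n · 𝐁. -/
open PowerSeries Finset

/-- For every positive integer `n`, in `ℚ[[T]]` : `∑_{i=0}^{n−1} 𝐁(nT) · (e^T)^i = n · 𝐁`. -/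
theorem bernoulli_multiplication_series (n : ℕ) (hn : 0 < n) :
    ∑ i ∈ range n, rescale (n : ℚ) (bernoulliPowerSeries ℚ) * (exp ℚ) ^ i =
      (n : ℚ⟦X⟧) * bernoulliPowerSeries ℚ := by
  have hexp : exp ℚ - 1 ≠ 0 := by
    intro h
    have := congrArg (coeff (R := ℚ) 1) h
    simp [coeff_exp] at this
  apply mul_right_cancel₀ hexp
  calc (∑ i ∈ range n, rescale (n : ℚ) (bernoulliPowerSeries ℚ) * exp ℚ ^ i) * (exp ℚ - 1)
      = rescale (n : ℚ) (bernoulliPowerSeries ℚ) * ((∑ i ∈ range n, exp ℚ ^ i) * (exp ℚ - 1)) := by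
        rw [← mul_sum, mul_assoc]
    _ = rescale (n : ℚ) (bernoulliPowerSeries ℚ) * (rescale (n : ℚ) (exp ℚ) - rescale (n : ℚ) 1) := by
        rw [geom_sum_mul, exp_pow_eq_rescale_exp, map_one]
    _ = rescale (n : ℚ) (bernoulliPowerSeries ℚ * (exp ℚ - 1)) := by
        rw [map_mul, map_sub]
    _ = (n : ℚ⟦X⟧) * X := by
        rw [bernoulliPowerSeries_mul_exp_sub_one, rescale_X]
        simp
    _ = (n : ℚ⟦X⟧) * bernoulliPowerSeries ℚ * (exp ℚ - 1) := by
        rw [mul_assoc, bernoulliPowerSeries_mul_exp_sub_one]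
end

section
/- Multiplication theorem for Bernoulli polynomials: for every positive integer n, every non-negative integer m, and every a ∈ ℚ, one has Σ_{i=0}^{n−1} B_m(a + i/n) = n^{1−m} · B_m(n·a), where B_m denotes the m-th Bernoulli polynomial and n^{1−m} is interpreted in ℚ (an integer power of n, possibly negative exponent). -/
open Finset PowerSeries

private noncomputable def Bser (t : ℚ) : PowerSeries ℚ :=
  PowerSeries.mk fun m => Polynomial.aeval t ((1 / (m.factorial : ℚ)) • Polynomial.bernoulli m)

private lemma Bser_mul_exp_sub_one (t : ℚ) :
    Bser t * (exp ℚ - 1) = PowerSeries.X * rescale t (exp ℚ) := by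
  unfold Bser; exact Polynomial.bernoulli_generating_function t

private lemma exp_sub_one_ne : (exp ℚ - 1 : PowerSeries ℚ) ≠ 0 := by
  intro h
  have := congrArg (PowerSeries.coeff (R := ℚ) 1) h
  simp [coeff_exp] at this

private lemma Bser_shift (t c : ℚ) :
    Bser t * rescale c (exp ℚ) = Bser (t + c) := by
  apply mul_right_cancel₀ exp_sub_one_ne
  rw [mul_right_comm, Bser_mul_exp_sub_one, Bser_mul_exp_sub_one, mul_assoc,
    exp_mul_exp_eq_exp_add]

/-- Multiplication theorem for Bernoulli polynomials: for `n ≥ 1`, `m ≥ 0`, `a ∈ ℚ`,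
`∑_{i=0}^{n−1} B_m(a + i/n) = n^{1−m} · B_m(n·a)`. -/
theorem bernoulli_polynomial_multiplication (n : ℕ) (hn : 0 < n) (m : ℕ) (a : ℚ) :
    ∑ i ∈ range n, (Polynomial.bernoulli m).eval (a + (i : ℚ) / n) =
      (n : ℚ) ^ ((1 : ℤ) - m) * (Polynomial.bernoulli m).eval ((n : ℚ) * a) := by
  have hn0 : (n : ℚ) ≠ 0 := Nat.cast_ne_zero.2 hn.ne'
  set c : ℚ := 1 / n with hc
  have hc0 : c ≠ 0 := one_div_ne_zero hn0
  have hnc : (n : ℚ) * c = 1 := by rw [hc]; field_simp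
  have key : ∀ i : ℕ, Bser (a + i / n) * rescale c (exp ℚ) = Bser (a + ((i : ℚ) + 1) / n) := by
    intro i
    rw [Bser_shift]
    have : a + (i : ℚ) / n + c = a + ((i : ℚ) + 1) / n := by rw [hc]; field_simp; ring
    rw [this]
  have h1 : (∑ i ∈ range n, Bser (a + (i : ℚ) / n)) * (rescale c (exp ℚ) - 1) =
      PowerSeries.X * rescale a (exp ℚ) := by
    rw [mul_sub, mul_one, Finset.sum_mul]
    have e1 : ∑ i ∈ range n, Bser (a + (i : ℚ) / n) * rescale c (exp ℚ) =
        ∑ i ∈ range n, Bser (a + ((i + 1 : ℕ) : ℚ) / n) := by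
      refine Finset.sum_congr rfl fun i _ => ?_
      rw [key i]; push_cast; ring_nf
    rw [e1, ← Finset.sum_sub_distrib,
      Finset.sum_range_sub (fun i : ℕ => Bser (a + (i : ℚ) / n))]
    rw [Nat.cast_zero, zero_div, add_zero, div_self hn0]
    have hB1 : Bser (a + 1) = Bser a * exp ℚ := by
      rw [← Bser_shift a 1, rescale_one, RingHom.id_apply]
    rw [hB1, ← mul_one (Bser a), mul_assoc, one_mul, ← mul_sub, Bser_mul_exp_sub_one]
  have h2 : ((n : ℚ) • rescale c (Bser ((n : ℚ) * a))) * (rescale c (exp ℚ) - 1) =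
      PowerSeries.X * rescale a (exp ℚ) := by
    rw [smul_mul_assoc, ← map_one (rescale c), ← map_sub, ← map_mul,
      Bser_mul_exp_sub_one, map_mul, rescale_rescale, rescale_X]
    have hca : (n : ℚ) * a * c = a := by
      rw [mul_comm ((n:ℚ)*a) c, ← mul_assoc, mul_comm c, hnc, one_mul]
    rw [hca, mul_assoc, ← smul_eq_C_mul, smul_smul, hnc, one_smul]
  have hne : rescale c (exp ℚ) - 1 ≠ 0 := by
    intro h
    have := congrArg (PowerSeries.coeff (R := ℚ) 1) h
    simp [coeff_rescale, coeff_exp] at this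
    exact hc0 this
  have hFG := mul_right_cancel₀ hne (h1.trans h2.symm)
  have E := congrArg (PowerSeries.coeff (R := ℚ) m) hFG
  simp only [map_sum, Bser, coeff_mk, PowerSeries.coeff_smul, coeff_rescale,
    Polynomial.coe_aeval_eq_eval, Polynomial.eval_smul, smul_eq_mul] at E
  rw [← Finset.mul_sum] at E
  have hm : (1 / (m.factorial : ℚ)) ≠ 0 :=
    one_div_ne_zero (Nat.cast_ne_zero.2 (Nat.factorial_ne_zero m))
  have hpow : (n : ℚ) ^ ((1 : ℤ) - m) = (n : ℚ) * c ^ m := by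
    rw [zpow_sub₀ hn0, zpow_one, zpow_natCast, hc, one_div, inv_pow, div_eq_mul_inv]
  rw [hpow]
  apply mul_left_cancel₀ hm
  rw [E]; ring
end

section
/- Euler's identity: for every integer m > 1, Σ_{i=1}^{m−1} C(2m, 2i) · B_{2i} · B_{2m−2i} = −(2m+1) · B_{2m}, where B_k denotes the k-th Bernoulli number and C(2m,2i) the binomial coefficient. -/
open Finset

open PowerSeries in
private lemma euler_psB : (bernoulliPowerSeries ℚ) ^ 2 =
    bernoulliPowerSeries ℚ - X * bernoulliPowerSeries ℚ -
      X * d⁄dX ℚ (bernoulliPowerSeries ℚ) := by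
  set B := bernoulliPowerSeries ℚ with hBdef
  set D := d⁄dX ℚ B with hDdef
  have hB : B * (exp ℚ - 1) = X := bernoulliPowerSeries_mul_exp_sub_one ℚ
  have hE : d⁄dX ℚ (exp ℚ) = exp ℚ := by
    ext n
    rw [coeff_derivative, coeff_exp, coeff_exp, Algebra.algebraMap_self]
    simp only [RingHom.id_apply]
    have h1 : ((Nat.factorial (n + 1) : ℕ) : ℚ) = (Nat.factorial n : ℚ) * (n + 1) := by
      rw [Nat.factorial_succ]; push_cast; ring
    have h2 : (Nat.factorial n : ℚ) ≠ 0 := Nat.cast_ne_zero.mpr n.factorial_ne_zero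
    have h3 : ((n : ℚ) + 1) ≠ 0 := by positivity
    field_simp [h1]
    rw [h1]; ring
  have hD : B * exp ℚ + (exp ℚ - 1) * D = 1 := by
    have h := congrArg (d⁄dX ℚ) hB
    rwa [Derivation.leibniz, smul_eq_mul, smul_eq_mul, map_sub, hE,
      Derivation.map_one_eq_zero, sub_zero, derivative_X] at h
  linear_combination B * hD - (B + D) * hB

open PowerSeries in
private lemma euler_conv (n : ℕ) :
    ∑ k ∈ range (n + 2), ((n + 1).choose k : ℚ) * bernoulli k * bernoulli (n + 1 - k)
      = bernoulli (n + 1) - (n + 1) * bernoulli n - (n + 1) * bernoulli (n + 1) := by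
  have h := congrArg (coeff (n + 1)) euler_psB
  rw [sq, coeff_mul, map_sub, map_sub, coeff_succ_X_mul, coeff_succ_X_mul,
    coeff_derivative] at h
  simp only [bernoulliPowerSeries, coeff_mk, Algebra.algebraMap_self, RingHom.id_apply] at h
  rw [Finset.Nat.sum_antidiagonal_eq_sum_range_succ
    (fun i j => (bernoulli i / (Nat.factorial i : ℚ)) * (bernoulli j / (Nat.factorial j : ℚ)))] at h
  have hfac : ∀ m : ℕ, ((Nat.factorial m : ℕ) : ℚ) ≠ 0 :=
    fun m => Nat.cast_ne_zero.mpr m.factorial_ne_zero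
  have key : ∑ k ∈ range (n + 2), ((n + 1).choose k : ℚ) * bernoulli k * bernoulli (n + 1 - k)
      = ((Nat.factorial (n + 1) : ℕ) : ℚ) * ∑ k ∈ range (n + 2),
          (bernoulli k / (Nat.factorial k : ℚ)) *
            (bernoulli (n + 1 - k) / (Nat.factorial (n + 1 - k) : ℚ)) := by
    rw [Finset.mul_sum]
    refine Finset.sum_congr rfl fun k hk => ?_
    have hk' : k ≤ n + 1 := by simpa [Nat.lt_succ_iff] using Finset.mem_range.mp hk
    rw [Nat.cast_choose ℚ hk']
    rw [div_mul_div_comm, mul_comm (bernoulli k) (bernoulli (n + 1 - k)),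
      ← div_mul_eq_mul_div]
    field_simp
  rw [key, h]
  have hfs : ((Nat.factorial (n + 1) : ℕ) : ℚ) = (Nat.factorial n : ℚ) * (n + 1) := by
    rw [Nat.factorial_succ]; push_cast; ring
  field_simp [hfs]
  rw [hfs]; ring

private lemma bernoulli_odd_zero {n : ℕ} (h : Odd n) (hn : 1 < n) : bernoulli n = 0 := by
  rw [bernoulli_eq_bernoulli'_of_ne_one (by omega)]
  exact bernoulli'_eq_zero_of_odd h hn

private lemma euler_even_sum (g : ℕ → ℚ) :
    ∀ m : ℕ, (∀ j, j < m → g (2 * j + 1) = 0) →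
      ∑ k ∈ range (2 * m + 1), g k = ∑ j ∈ range (m + 1), g (2 * j) := by
  intro m
  induction m with
  | zero => simp
  | succ p ih =>
    intro hz
    have h1 : 2 * (p + 1) + 1 = (2 * p + 1) + 1 + 1 := by ring
    rw [h1, Finset.sum_range_succ g ((2 * p + 1) + 1), Finset.sum_range_succ g (2 * p + 1),
      ih (fun j hj => hz j (by omega)), hz p (by omega),
      Finset.sum_range_succ (fun j => g (2 * j)) (p + 1)]
    have h2 : 2 * p + 1 + 1 = 2 * (p + 1) := by ring
    rw [h2]
    ring

/-- Euler's identity: for every integer `m > 1`,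
`∑_{i=1}^{m−1} C(2m,2i) · B_{2i} · B_{2m−2i} = −(2m+1) · B_{2m}`. -/
theorem euler_identity (m : ℕ) (hm : 1 < m) :
    ∑ i ∈ Ico 1 m, ((2 * m).choose (2 * i) : ℚ) * bernoulli (2 * i) * bernoulli (2 * m - 2 * i) =
      -(2 * (m : ℚ) + 1) * bernoulli (2 * m) := by
  set f : ℕ → ℚ := fun k => ((2 * m).choose k : ℚ) * bernoulli k * bernoulli (2 * m - k) with hf
  have hconv := euler_conv (2 * m - 1)
  have h2m : 2 * m - 1 + 1 = 2 * m := by omega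
  rw [h2m] at hconv
  have hodd : bernoulli (2 * m - 1) = 0 :=
    bernoulli_odd_zero ⟨m - 1, by omega⟩ (by omega)
  rw [hodd, mul_zero, sub_zero] at hconv
  have hcast : ((2 * m - 1 : ℕ) : ℚ) + 1 = 2 * m := by
    push_cast [Nat.cast_sub (by omega : 1 ≤ 2 * m)]; ring
  rw [hcast] at hconv
  have hzero : ∀ j, j < m → f (2 * j + 1) = 0 := by
    intro j hj
    rcases Nat.eq_zero_or_pos j with rfl | hj0
    · simp only [hf, mul_zero, zero_add]
      simp [hodd]
    · have hb : bernoulli (2 * j + 1) = 0 :=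
        bernoulli_odd_zero ⟨j, by ring⟩ (by omega)
      simp [hf, hb]
  have hr : 2 * m - 1 + 2 = 2 * m + 1 := by omega
  rw [hr, euler_even_sum f m hzero, Finset.sum_range_succ] at hconv
  have hfirst : ∑ j ∈ range m, f (2 * j)
      = f 0 + ∑ j ∈ Ico 1 m, f (2 * j) := by
    rw [Finset.range_eq_Ico, Finset.sum_eq_sum_Ico_succ_bot (by omega : 0 < m)]
  rw [hfirst] at hconv
  have hf0 : f 0 = bernoulli (2 * m) := by simp [hf]
  have hflast : f (2 * m) = bernoulli (2 * m) := by simp [hf]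
  rw [hf0, hflast] at hconv
  have hs : ∑ j ∈ Ico 1 m, f (2 * j)
      = ∑ i ∈ Ico 1 m, ((2 * m).choose (2 * i) : ℚ) * bernoulli (2 * i) *
          bernoulli (2 * m - 2 * i) := rfl
  rw [hs] at hconv
  linarith [hconv]
end

section
/- For every integer m ≥ 1, Σ_{i=0}^{m} C(m,i) · B_i · B_{m−i} = (1−m) · B_m − m · B_{m−1}, where B_k denotes the k-th Bernoulli number and C(m,i) the binomial coefficient. -/
open Finset

open PowerSeries in
private lemma deriv_exp_aux : d⁄dX ℚ (exp ℚ) = exp ℚ := by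
  ext n
  rw [PowerSeries.coeff_derivative, PowerSeries.coeff_exp, PowerSeries.coeff_exp]
  simp only [Algebra.algebraMap_self, RingHom.id_apply]
  rw [Nat.factorial_succ]
  have h1 : (n.factorial : ℚ) ≠ 0 := Nat.cast_ne_zero.2 (Nat.factorial_ne_zero n)
  push_cast
  field_simp

open PowerSeries in
private lemma key_aux : bernoulliPowerSeries ℚ * bernoulliPowerSeries ℚ =
    (1 - X) * bernoulliPowerSeries ℚ - X * (d⁄dX ℚ (bernoulliPowerSeries ℚ)) := by
  have h := bernoulliPowerSeries_mul_exp_sub_one ℚ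
  have hd : (d⁄dX ℚ (bernoulliPowerSeries ℚ)) * (exp ℚ - 1) +
      bernoulliPowerSeries ℚ * exp ℚ = 1 := by
    have h2 := congrArg (d⁄dX ℚ) h
    rw [Derivation.leibniz, derivative_X, map_sub, deriv_exp_aux,
      Derivation.map_one_eq_zero, sub_zero] at h2
    simp only [smul_eq_mul] at h2
    linear_combination h2
  have hne : (exp ℚ - 1 : ℚ⟦X⟧) ≠ 0 := by
    intro hcon
    have := congrArg (coeff (R := ℚ) 1) hcon
    simp [PowerSeries.coeff_exp, Nat.factorial] at this
  apply mul_right_cancel₀ (b := (exp ℚ - 1) * (exp ℚ - 1)) (mul_ne_zero hne hne)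
  linear_combination (bernoulliPowerSeries ℚ * (exp ℚ - 1) + X
      - (1 - X) * (exp ℚ - 1) - X * exp ℚ) * h + X * (exp ℚ - 1) * hd

/-- For every integer `m ≥ 1`,
`∑_{i=0}^{m} C(m,i) · B_i · B_{m−i} = (1−m) · B_m − m · B_{m−1}`. -/
theorem euler_identity_all_orders (m : ℕ) (hm : 1 ≤ m) :
    ∑ i ∈ range (m + 1), (m.choose i : ℚ) * bernoulli i * bernoulli (m - i) =
      (1 - (m : ℚ)) * bernoulli m - (m : ℚ) * bernoulli (m - 1) := by
  obtain ⟨n, rfl⟩ : ∃ n, m = n + 1 := ⟨m - 1, by omega⟩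
  have hk := congrArg (PowerSeries.coeff (R := ℚ) (n + 1)) key_aux
  rw [PowerSeries.coeff_mul, Finset.Nat.sum_antidiagonal_eq_sum_range_succ_mk] at hk
  rw [map_sub, sub_mul, one_mul, map_sub, PowerSeries.coeff_succ_X_mul,
    PowerSeries.coeff_succ_X_mul, PowerSeries.coeff_derivative] at hk
  simp only [bernoulliPowerSeries, PowerSeries.coeff_mk, Algebra.algebraMap_self,
    RingHom.id_apply, Nat.succ_eq_add_one] at hk
  have hmul := congrArg (fun x : ℚ => ((n + 1).factorial : ℚ) * x) hk
  simp only [Finset.mul_sum] at hmul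
  have hterm : ∀ i ∈ range (n + 1 + 1),
      ((n + 1).factorial : ℚ) *
        (bernoulli i / i.factorial * (bernoulli (n + 1 - i) / (n + 1 - i).factorial)) =
      ((n + 1).choose i : ℚ) * bernoulli i * bernoulli (n + 1 - i) := by
    intro i hi
    rw [Nat.cast_choose ℚ (by simp only [Finset.mem_range] at hi; omega : i ≤ n + 1)]
    have h1 : (i.factorial : ℚ) ≠ 0 := Nat.cast_ne_zero.2 (Nat.factorial_ne_zero i)
    have h2 : ((n + 1 - i).factorial : ℚ) ≠ 0 := Nat.cast_ne_zero.2 (Nat.factorial_ne_zero _)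
    field_simp
  rw [Finset.sum_congr rfl hterm] at hmul
  rw [hmul]
  have hfac : ((n + 1).factorial : ℚ) = (n.factorial : ℚ) * (n + 1) := by
    rw [Nat.factorial_succ]; push_cast; ring
  have hn0 : (n.factorial : ℚ) ≠ 0 := Nat.cast_ne_zero.2 (Nat.factorial_ne_zero n)
  have hn1 : ((n + 1).factorial : ℚ) ≠ 0 := Nat.cast_ne_zero.2 (Nat.factorial_ne_zero _)
  push_cast
  field_simp [hfac]
  ring_nf
  rw [add_comm 1 n, hfac]
  ring
end

section
/- For every integer n ≥ 0, Σ_{i=0}^{n} C(n,i) · B_{1+i} · B_{1+n−i} = (1/6)·(n−1)·B_n − B_{n+1} − (1/6)·(n+3)·B_{n+2}, where B_k denotes the k-th Bernoulli number. -/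
open Nat Finset PowerSeries

noncomputable section AgohDilcherAux

local notation "B" => bernoulliPowerSeries ℚ
local notation "DD" => d⁄dX ℚ

private theorem my_derivative_exp : DD (exp ℚ) = exp ℚ := by
  ext n
  simp [PowerSeries.coeff_derivative, PowerSeries.coeff_exp, Nat.factorial_succ]
  field_simp

private theorem my_key1 : B ^ 2 = B - X * B - X * DD B := by
  have h := bernoulliPowerSeries_mul_exp_sub_one ℚ
  have h2 : B * exp ℚ + (exp ℚ - 1) * DD B = 1 := by
    have := congrArg DD h
    rw [Derivation.leibniz, map_sub, my_derivative_exp, Derivation.map_one_eq_zero,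
      sub_zero, derivative_X, smul_eq_mul, smul_eq_mul] at this
    exact this
  linear_combination (-(DD B) - B) * h + B * h2

private theorem my_key2 :
    6 * (X ^ 2 * (DD B) ^ 2) =
      -(6 * (X ^ 2 * DD B)) - X ^ 2 * B + X ^ 3 * DD B
        - X ^ 3 * DD (DD (DD B)) - 3 * (X ^ 2 * DD (DD B)) := by
  have key1' : B * B = B - X * B - X * DD B := by linear_combination my_key1
  have h1 := congrArg DD key1'
  simp only [map_sub, map_add, Derivation.leibniz, derivative_X, smul_eq_mul, mul_one] at h1
  have h2 := congrArg DD h1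
  simp only [map_sub, map_add, Derivation.leibniz, derivative_X, smul_eq_mul, mul_one] at h2
  linear_combination (2*X + 4*(X*DD B)) * my_key1 + (2*X - 2*(X*B) - X^2) * h1 + X^2 * h2

private theorem my_coeff_B (k : ℕ) : coeff (R := ℚ) k B = bernoulli k / k ! := by
  simp [bernoulliPowerSeries, coeff_mk]

private theorem my_coeff_v (k : ℕ) : coeff (R := ℚ) k (DD B) = bernoulli (k + 1) / k ! := by
  rw [PowerSeries.coeff_derivative, my_coeff_B, Nat.factorial_succ]
  have f1 : (k ! : ℚ) ≠ 0 := by exact_mod_cast k.factorial_ne_zero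
  have f2 : ((k : ℚ) + 1) ≠ 0 := by positivity
  push_cast
  field_simp

private theorem my_coeff_v1 (k : ℕ) : coeff (R := ℚ) k (DD (DD B)) = bernoulli (k + 2) / k ! := by
  rw [PowerSeries.coeff_derivative, my_coeff_v, Nat.factorial_succ]
  have f1 : (k ! : ℚ) ≠ 0 := by exact_mod_cast k.factorial_ne_zero
  have f2 : ((k : ℚ) + 1) ≠ 0 := by positivity
  have h : k + 1 + 1 = k + 2 := rfl
  rw [h]
  push_cast
  field_simp

private theorem my_coeff_v2 (k : ℕ) : coeff (R := ℚ) k (DD (DD (DD B))) = bernoulli (k + 3) / k ! := by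
  rw [PowerSeries.coeff_derivative, my_coeff_v1, Nat.factorial_succ]
  have f1 : (k ! : ℚ) ≠ 0 := by exact_mod_cast k.factorial_ne_zero
  have f2 : ((k : ℚ) + 1) ≠ 0 := by positivity
  have h : k + 1 + 2 = k + 3 := rfl
  rw [h]
  push_cast
  field_simp

end AgohDilcherAux

/-- For every `n ≥ 0`,
`∑_{i=0}^{n} C(n,i) · B_{1+i} · B_{1+n−i}
  = (1/6)(n−1)·B_n − B_{n+1} − (1/6)(n+3)·B_{n+2}`. -/
theorem agoh_dilcher_identity (n : ℕ) :
    ∑ i ∈ range (n + 1), (n.choose i : ℚ) * bernoulli (1 + i) * bernoulli (1 + n - i) =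
      (1 / 6) * ((n : ℚ) - 1) * bernoulli n - bernoulli (n + 1) -
        (1 / 6) * ((n : ℚ) + 3) * bernoulli (n + 2) := by
  have fn : (n ! : ℚ) ≠ 0 := by exact_mod_cast n.factorial_ne_zero
  have H := congrArg (PowerSeries.coeff (R := ℚ) (n + 2)) my_key2
  simp only [map_sub, map_add, map_neg] at H
  -- rewrite the pieces
  have hsq : PowerSeries.coeff (R := ℚ) (n + 2) (PowerSeries.X ^ 2 * (d⁄dX ℚ (bernoulliPowerSeries ℚ)) ^ 2)
      = (∑ i ∈ range (n + 1),
          (n.choose i : ℚ) * bernoulli (1 + i) * bernoulli (1 + n - i)) / n ! := by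
    rw [PowerSeries.coeff_X_pow_mul, sq, PowerSeries.coeff_mul,
      Finset.Nat.sum_antidiagonal_eq_sum_range_succ_mk, Finset.sum_div]
    refine Finset.sum_congr rfl fun i hi => ?_
    rw [mem_range] at hi
    have hin : i ≤ n := by omega
    rw [my_coeff_v, my_coeff_v, Nat.cast_choose ℚ hin]
    have e1 : 1 + n - i = n - i + 1 := by omega
    have e2 : 1 + i = i + 1 := by omega
    rw [e1, e2]
    have f1 : (i ! : ℚ) ≠ 0 := by exact_mod_cast i.factorial_ne_zero
    have f2 : ((n - i)! : ℚ) ≠ 0 := by exact_mod_cast (n - i).factorial_ne_zero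
    field_simp
  have hb : PowerSeries.coeff (R := ℚ) (n + 2) (PowerSeries.X ^ 2 * bernoulliPowerSeries ℚ)
      = bernoulli n / n ! := by
    rw [PowerSeries.coeff_X_pow_mul, my_coeff_B]
  have hv : PowerSeries.coeff (R := ℚ) (n + 2) (PowerSeries.X ^ 2 * d⁄dX ℚ (bernoulliPowerSeries ℚ))
      = bernoulli (n + 1) / n ! := by
    rw [PowerSeries.coeff_X_pow_mul, my_coeff_v]
  have hv1 : PowerSeries.coeff (R := ℚ) (n + 2)
      (PowerSeries.X ^ 2 * d⁄dX ℚ (d⁄dX ℚ (bernoulliPowerSeries ℚ)))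
      = bernoulli (n + 2) / n ! := by
    rw [PowerSeries.coeff_X_pow_mul, my_coeff_v1]
  have hxv : PowerSeries.coeff (R := ℚ) (n + 2) (PowerSeries.X ^ 3 * d⁄dX ℚ (bernoulliPowerSeries ℚ))
      = n * bernoulli n / n ! := by
    rw [PowerSeries.coeff_X_pow_mul']
    rcases n with _ | k
    · norm_num
    · rw [if_pos (by omega)]
      have e : k + 1 + 2 - 3 = k := by omega
      rw [e, my_coeff_v]
      have f1 : (k ! : ℚ) ≠ 0 := by exact_mod_cast k.factorial_ne_zero
      rw [Nat.factorial_succ]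
      push_cast
      field_simp
  have hxv2 : PowerSeries.coeff (R := ℚ) (n + 2)
      (PowerSeries.X ^ 3 * d⁄dX ℚ (d⁄dX ℚ (d⁄dX ℚ (bernoulliPowerSeries ℚ))))
      = n * bernoulli (n + 2) / n ! := by
    rw [PowerSeries.coeff_X_pow_mul']
    rcases n with _ | k
    · norm_num
    · rw [if_pos (by omega)]
      have e : k + 1 + 2 - 3 = k := by omega
      rw [e, my_coeff_v2]
      have e2 : k + 3 = k + 1 + 2 := rfl
      have f1 : (k ! : ℚ) ≠ 0 := by exact_mod_cast k.factorial_ne_zero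
      rw [e2, Nat.factorial_succ]
      push_cast
      field_simp
  -- coefficient of numerals
  have h6 : PowerSeries.coeff (R := ℚ) (n + 2)
      ((6 : ℚ⟦X⟧) * (PowerSeries.X ^ 2 * (d⁄dX ℚ (bernoulliPowerSeries ℚ)) ^ 2))
      = 6 * ((∑ i ∈ range (n + 1),
          (n.choose i : ℚ) * bernoulli (1 + i) * bernoulli (1 + n - i)) / n !) := by
    rw [show (6 : ℚ⟦X⟧) = PowerSeries.C (R := ℚ) 6 from (map_ofNat (PowerSeries.C (R := ℚ)) 6).symm, PowerSeries.coeff_C_mul, hsq]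
  have h6' : PowerSeries.coeff (R := ℚ) (n + 2)
      ((6 : ℚ⟦X⟧) * (PowerSeries.X ^ 2 * d⁄dX ℚ (bernoulliPowerSeries ℚ)))
      = 6 * (bernoulli (n + 1) / n !) := by
    rw [show (6 : ℚ⟦X⟧) = PowerSeries.C (R := ℚ) 6 from (map_ofNat (PowerSeries.C (R := ℚ)) 6).symm, PowerSeries.coeff_C_mul, hv]
  have h3 : PowerSeries.coeff (R := ℚ) (n + 2)
      ((3 : ℚ⟦X⟧) * (PowerSeries.X ^ 2 * d⁄dX ℚ (d⁄dX ℚ (bernoulliPowerSeries ℚ))))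
      = 3 * (bernoulli (n + 2) / n !) := by
    rw [show (3 : ℚ⟦X⟧) = PowerSeries.C (R := ℚ) 3 from (map_ofNat (PowerSeries.C (R := ℚ)) 3).symm, PowerSeries.coeff_C_mul, hv1]
  rw [h6, h6', hb, hxv, hxv2, h3] at H
  have H2 : (6 * ∑ i ∈ range (n + 1),
      (n.choose i : ℚ) * bernoulli (1 + i) * bernoulli (1 + n - i)) / n !
      = (-(6 * bernoulli (n + 1)) - bernoulli n + n * bernoulli n
          - n * bernoulli (n + 2) - 3 * bernoulli (n + 2)) / n ! := by
    linear_combination H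
  rw [div_eq_div_iff fn fn] at H2
  have H3 := mul_right_cancel₀ fn H2
  linear_combination H3 / 6
end

section
/- Define polynomials f_n ∈ ℚ[U,V] inductively by f_0 = V and, for n > 0, f_n = (1−n)·f_{n−1} + U·(∂f_{n−1}/∂U) + V·(∂f_{n−1}/∂V) − U·V·(∂f_{n−1}/∂V) − V²·(∂f_{n−1}/∂V). Then for every non-negative integer n, the identity T^n · (d/dT)^n 𝐁 = f_n(T, 𝐁) holds in ℚ[[T]], where (d/dT)^n is the n-th iterated formal derivative and f_n(T,𝐁) denotes the evaluation of f_n obtained by substituting the power series T for U and 𝐁 for V. -/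
open MvPolynomial

/-- The polynomials `f_n ∈ ℚ[U,V]` (with `U = X 0`, `V = X 1`): `f_0 = V` and
`f_n = (1−n)·f_{n−1} + U·∂_U f_{n−1} + V·∂_V f_{n−1} − UV·∂_V f_{n−1} − V²·∂_V f_{n−1}`. -/
noncomputable def lucasPoly : ℕ → MvPolynomial (Fin 2) ℚ
  | 0 => X 1
  | n + 1 =>
      C (1 - ((n : ℚ) + 1)) * lucasPoly n +
        X 0 * pderiv 0 (lucasPoly n) +
        X 1 * pderiv 1 (lucasPoly n) -
        X 0 * X 1 * pderiv 1 (lucasPoly n) -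
        (X 1) ^ 2 * pderiv 1 (lucasPoly n)

lemma derivative_exp'_s13 : PowerSeries.derivative ℚ (PowerSeries.exp ℚ) = PowerSeries.exp ℚ := by
  ext n
  rw [PowerSeries.coeff_derivative, PowerSeries.coeff_exp, PowerSeries.coeff_exp]
  simp only [RingHom.id_apply, Algebra.algebraMap_self, map_div₀, map_one, map_natCast]
  rw [Nat.factorial_succ]
  push_cast
  have h1 : ((n : ℚ) + 1) ≠ 0 := by positivity
  have h2 : ((n.factorial : ℚ)) ≠ 0 := by exact_mod_cast n.factorial_ne_zero
  field_simp

/-- Key identity: `X · 𝐁' = 𝐁 − X·𝐁 − 𝐁²`. -/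
lemma X_mul_derivative_bernoulli :
    PowerSeries.X * PowerSeries.derivative ℚ (bernoulliPowerSeries ℚ) =
      bernoulliPowerSeries ℚ - PowerSeries.X * bernoulliPowerSeries ℚ -
        bernoulliPowerSeries ℚ ^ 2 := by
  set B := bernoulliPowerSeries ℚ
  set E := PowerSeries.exp ℚ
  have hBE : B * (E - 1) = PowerSeries.X := bernoulliPowerSeries_mul_exp_sub_one ℚ
  have hd : PowerSeries.derivative ℚ (B * (E - 1)) = 1 := by
    rw [hBE, PowerSeries.derivative_X]
  have hdE : PowerSeries.derivative ℚ (E - 1) = E := by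
    rw [map_sub, derivative_exp'_s13, Derivation.map_one_eq_zero, sub_zero]
  rw [Derivation.leibniz, hdE, smul_eq_mul, smul_eq_mul] at hd
  have h2 : (E - 1) * PowerSeries.derivative ℚ B = 1 - B * E := by linear_combination hd
  calc PowerSeries.X * PowerSeries.derivative ℚ B
      = B * ((E - 1) * PowerSeries.derivative ℚ B) := by rw [← hBE]; ring
    _ = B * (1 - B * E) := by rw [h2]
    _ = B - B * (B * (E - 1)) - B ^ 2 := by ring
    _ = B - PowerSeries.X * B - B ^ 2 := by rw [hBE]; ring

/-- Chain rule for `aeval ![a, b]` composed with the power series derivative. -/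
lemma derivative_aeval (p : MvPolynomial (Fin 2) ℚ) (a b : PowerSeries ℚ) :
    PowerSeries.derivative ℚ (aeval ![a, b] p) =
      aeval ![a, b] (pderiv 0 p) * PowerSeries.derivative ℚ a +
        aeval ![a, b] (pderiv 1 p) * PowerSeries.derivative ℚ b := by
  induction p using MvPolynomial.induction_on with
  | C c => simp [algebraMap_eq]
  | add p q hp hq => simp [map_add, hp, hq]; ring
  | mul_X p i hp =>
      fin_cases i <;>
        simp [Derivation.leibniz, smul_eq_mul, hp, pderiv_mul] <;> ring

/-- For every `n ≥ 0`, `T^n · (d/dT)^n 𝐁 = f_n(T, 𝐁)` in `ℚ[[T]]`. -/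
theorem iterated_derivative_bernoulliPowerSeries (n : ℕ) :
    PowerSeries.X ^ n * (⇑(PowerSeries.derivative ℚ))^[n] (bernoulliPowerSeries ℚ) =
      aeval ![PowerSeries.X, bernoulliPowerSeries ℚ] (lucasPoly n) := by
  induction n with
  | zero => simp [lucasPoly]
  | succ n ih =>
      set B := bernoulliPowerSeries ℚ with hB
      set v : Fin 2 → PowerSeries ℚ := ![PowerSeries.X, B] with hv
      set D := PowerSeries.derivative ℚ with hD
      have hiter : (⇑D)^[n + 1] B = D ((⇑D)^[n] B) := Function.iterate_succ_apply' _ _ _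
      have hder := congrArg (⇑D) ih
      rw [Derivation.leibniz, smul_eq_mul, smul_eq_mul, derivative_aeval] at hder
      have hkey : PowerSeries.X * D (PowerSeries.X ^ n) =
          (n : PowerSeries ℚ) * PowerSeries.X ^ n := by
        cases n with
        | zero => simp
        | succ m =>
            rw [Derivation.leibniz_pow]
            simp only [hD, PowerSeries.derivative_X, smul_eq_mul, mul_one, nsmul_eq_mul]
            push_cast
            ring
      have hXB : PowerSeries.X * D B = B - PowerSeries.X * B - B ^ 2 :=
        X_mul_derivative_bernoulli
      rw [hiter]
      show PowerSeries.X ^ (n + 1) * D ((⇑D)^[n] B) = _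
      rw [lucasPoly]
      simp only [map_add, map_sub, map_mul, aeval_C, aeval_X, map_pow,
        PowerSeries.derivative_X, mul_one, hv, Matrix.cons_val_zero, Matrix.cons_val_one,
        Matrix.head_cons, algebraMap_eq]
      simp only [map_one, map_natCast]
      simp only [← hv] at hder ⊢
      set y := (⇑D)^[n] B
      set F := aeval v (lucasPoly n)
      set P0 := aeval v (pderiv 0 (lucasPoly n))
      set P1 := aeval v (pderiv 1 (lucasPoly n))
      simp only [PowerSeries.derivative_X, mul_one] at hder
      linear_combination PowerSeries.X * hder - y * hkey +
        (-(n : PowerSeries ℚ)) * ih + P1 * hXB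
end

section
/- For every integer n ≥ 1, Σ_{i=0}^{n} 3^i · 2^{n−i} · C(n,i) · B_i · B_{n−i} = 2n·3^{n−2} · B_{n−1}(1/3) − (2n·3^{n−2} + 3n·2^{n−2} + n) · B_{n−1} + (1−n) · B_n, where B_k denotes the k-th Bernoulli number, B_{n−1}(1/3) the (n−1)-st Bernoulli polynomial evaluated at 1/3, and the powers 3^{n−2}, 2^{n−2} are taken in ℚ (integer exponents, possibly negative). -/
open Finset PowerSeries Nat

namespace Bern23

noncomputable def E : ℚ⟦X⟧ := PowerSeries.exp ℚ
noncomputable def F : ℚ⟦X⟧ := bernoulliPowerSeries ℚ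
noncomputable def G : ℚ⟦X⟧ :=
  PowerSeries.mk fun n => Polynomial.aeval (1/3 : ℚ) ((1 / n ! : ℚ) • Polynomial.bernoulli n)

lemma hF : F * (E - 1) = X := bernoulliPowerSeries_mul_exp_sub_one ℚ

lemma hG : G * (E - 1) = X * rescale (1/3 : ℚ) E :=
  Polynomial.bernoulli_generating_function (1/3 : ℚ)

lemma rescale3E : rescale (3:ℚ) E = E ^ 3 := by
  have := (PowerSeries.exp_pow_eq_rescale_exp (A := ℚ) 3).symm
  norm_num at this
  rw [E, this]

lemma rescale2E : rescale (2:ℚ) E = E ^ 2 := by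
  have := (PowerSeries.exp_pow_eq_rescale_exp (A := ℚ) 2).symm
  norm_num at this
  rw [E, this]

lemma C3 : C (3:ℚ) = (3 : ℚ⟦X⟧) := map_ofNat _ 3
lemma C2 : C (2:ℚ) = (2 : ℚ⟦X⟧) := map_ofNat _ 2

lemma hF3 : rescale (3:ℚ) F * (E^3 - 1) = 3 * X := by
  have := congrArg (rescale (3:ℚ)) hF
  rw [map_mul, map_sub, map_one, rescale3E, rescale_X, C3] at this
  exact this

lemma hF2 : rescale (2:ℚ) F * (E^2 - 1) = 2 * X := by
  have := congrArg (rescale (2:ℚ)) hF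
  rw [map_mul, map_sub, map_one, rescale2E, rescale_X, C2] at this
  exact this

lemma hG3 : rescale (3:ℚ) G * (E^3 - 1) = 3 * X * E := by
  have := congrArg (rescale (3:ℚ)) hG
  rw [map_mul, map_sub, map_one, rescale3E, map_mul, rescale_X, rescale_rescale, C3] at this
  norm_num at this
  rw [this]


lemma hE' : d⁄dX ℚ E = E := by
  ext n
  rw [PowerSeries.coeff_derivative]
  simp only [E, PowerSeries.coeff_exp]
  rw [Nat.factorial_succ]
  push_cast
  have : ((n:ℚ) + 1) ≠ 0 := by positivity
  field_simp

lemma hdF : d⁄dX ℚ F * (E - 1) + F * E = 1 := by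
  have := congrArg (d⁄dX ℚ) hF
  rw [Derivation.leibniz, PowerSeries.derivative_X, map_sub, hE'] at this
  simp only [smul_eq_mul, map_one, Derivation.map_one_eq_zero, sub_zero] at this
  linear_combination this

lemma hEsub : E - 1 ≠ 0 := by
  intro h
  have := congrArg (PowerSeries.coeff 1) h
  simp [E, PowerSeries.coeff_exp] at this

lemma hEpow (k : ℕ) (hk : k ≠ 0) : E ^ k - 1 ≠ 0 := by
  intro h
  have := congrArg (PowerSeries.coeff 1) h
  rw [show E ^ k = rescale (k:ℚ) (exp ℚ) from by
    rw [E, PowerSeries.exp_pow_eq_rescale_exp]] at this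
  simp [E, coeff_rescale, PowerSeries.coeff_exp, hk] at this

lemma key3 : F - X * d⁄dX ℚ F = E * F ^ 2 := by
  apply mul_right_cancel₀ hEsub
  have h1 : X * (d⁄dX ℚ F * (E - 1)) = X * (1 - F * E) := by linear_combination X * hdF
  calc (F - X * d⁄dX ℚ F) * (E - 1)
      = F * (E - 1) - X * (d⁄dX ℚ F * (E - 1)) := by ring
    _ = X - X * (1 - F * E) := by rw [hF, h1]
    _ = X * F * E := by ring
    _ = E * F * (F * (E - 1)) := by rw [hF]; ring
    _ = E * F ^ 2 * (E - 1) := by ring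

lemma main_id : 6 * (rescale (3:ℚ) F * rescale (2:ℚ) F)
    = 4 * (X * rescale (3:ℚ) G) - 4 * (X * rescale (3:ℚ) F) - 9 * (X * rescale (2:ℚ) F)
      - 6 * (X * F) + 6 * (F - X * d⁄dX ℚ F) := by
  rw [key3]
  have hD : ((E^3 - 1) * (E^2 - 1) * (E - 1)^2 : ℚ⟦X⟧) ≠ 0 := by
    refine mul_ne_zero (mul_ne_zero (hEpow 3 (by norm_num)) (hEpow 2 (by norm_num))) ?_
    exact pow_ne_zero _ hEsub
  apply mul_right_cancel₀ hD
  linear_combination (6 * rescale (2:ℚ) F * (E^2-1) * (E-1)^2) * hF3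
    + (18 * (X:ℚ⟦X⟧) * (E-1)^2) * hF2
    - (4 * (X:ℚ⟦X⟧) * (E^2-1) * (E-1)^2) * hG3
    + (4 * (X:ℚ⟦X⟧) * (E^2-1) * (E-1)^2) * hF3
    + (9 * (X:ℚ⟦X⟧) * (E^3-1) * (E-1)^2) * hF2
    + (6 * (X:ℚ⟦X⟧) * (E^3-1) * (E^2-1) * (E-1)) * hF
    - (6 * E * (E^3-1) * (E^2-1) * (F*(E-1)+X)) * hF


lemma coeffF (k : ℕ) : PowerSeries.coeff k F = bernoulli k / k ! := by
  simp [F, bernoulliPowerSeries, PowerSeries.coeff_mk]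

lemma coeffG (k : ℕ) : PowerSeries.coeff k G = (Polynomial.bernoulli k).eval (1/3 : ℚ) / k ! := by
  simp [G, PowerSeries.coeff_mk, Polynomial.coe_aeval_eq_eval, Polynomial.eval_smul,
    smul_eq_mul]
  ring

lemma coeffs (m : ℕ) :
    6 * ∑ i ∈ range (m+2),
        (3:ℚ)^i * bernoulli i / i ! * (2^(m+1-i) * bernoulli (m+1-i) / (m+1-i)!)
    = 4 * (3^m * (Polynomial.bernoulli m).eval (1/3:ℚ) / m !)
      - 4 * (3^m * bernoulli m / m !) - 9 * (2^m * bernoulli m / m !) - 6 * (bernoulli m / m !)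
      + 6 * (bernoulli (m+1) / (m+1)! - bernoulli (m+1) / (m+1)! * (m+1)) := by
  have h := congrArg (PowerSeries.coeff (m+1)) main_id
  simp only [show (6:ℚ⟦X⟧) = C (6:ℚ) from (map_ofNat _ _).symm,
    show (4:ℚ⟦X⟧) = C (4:ℚ) from (map_ofNat _ _).symm,
    show (9:ℚ⟦X⟧) = C (9:ℚ) from (map_ofNat _ _).symm,
    map_sub, map_add, PowerSeries.coeff_C_mul, PowerSeries.coeff_succ_X_mul,
    PowerSeries.coeff_derivative, coeff_rescale, coeffF, coeffG] at h
  rw [PowerSeries.coeff_mul, Finset.Nat.sum_antidiagonal_eq_sum_range_succ_mk] at h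
  simp only [coeff_rescale, coeffF] at h
  convert h using 2
  all_goals first
    | (refine Finset.sum_congr rfl fun i hi => by ring)
    | ring

end Bern23


/-- For every `n ≥ 1`,
`∑_{i=0}^{n} 3^i·2^{n−i}·C(n,i)·B_i·B_{n−i}
  = 2n·3^{n−2}·B_{n−1}(1/3) − (2n·3^{n−2} + 3n·2^{n−2} + n)·B_{n−1} + (1−n)·B_n`,
where `3^{n−2}` and `2^{n−2}` are integer powers in `ℚ` (possibly negative exponent). -/
theorem bernoulli_23_identity (n : ℕ) (hn : 1 ≤ n) :
    ∑ i ∈ range (n + 1), (3 : ℚ) ^ i * (2 : ℚ) ^ (n - i) * (n.choose i : ℚ) *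
        bernoulli i * bernoulli (n - i) =
      2 * (n : ℚ) * (3 : ℚ) ^ ((n : ℤ) - 2) * (Polynomial.bernoulli (n - 1)).eval (1 / 3 : ℚ) -
        (2 * (n : ℚ) * (3 : ℚ) ^ ((n : ℤ) - 2) + 3 * (n : ℚ) * (2 : ℚ) ^ ((n : ℤ) - 2) + n) *
          bernoulli (n - 1) +
        (1 - (n : ℚ)) * bernoulli n := by
  obtain ⟨m, rfl⟩ : ∃ m, n = m + 1 := ⟨n - 1, by omega⟩
  have hfac : ∀ k : ℕ, ((k ! : ℚ)) ≠ 0 := fun k => Nat.cast_ne_zero.2 (Nat.factorial_ne_zero k)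
  have hL : ∑ i ∈ range (m + 1 + 1), (3 : ℚ) ^ i * 2 ^ (m + 1 - i) * ((m+1).choose i : ℚ) *
        bernoulli i * bernoulli (m + 1 - i)
      = ((m+1)! : ℚ) * ∑ i ∈ range (m+2),
          (3:ℚ)^i * bernoulli i / i ! * (2^(m+1-i) * bernoulli (m+1-i) / (m+1-i)!) := by
    rw [Finset.mul_sum]
    refine Finset.sum_congr rfl fun i hi => ?_
    rw [Finset.mem_range] at hi
    have h1 : i ≤ m + 1 := by omega
    rw [Nat.cast_choose ℚ h1]
    have h2 := hfac i; have h3 := hfac (m+1-i); have h4 := hfac (m+1)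
    field_simp
  have h3z : (3:ℚ) ^ ((↑(m+1):ℤ) - 2) = 3^m / 3 := by
    have e : ((↑(m+1):ℤ) - 2) = (m:ℤ) - 1 := by push_cast; ring
    rw [e, zpow_sub₀ (by norm_num : (3:ℚ) ≠ 0), zpow_natCast, zpow_one]
  have h2z : (2:ℚ) ^ ((↑(m+1):ℤ) - 2) = 2^m / 2 := by
    have e : ((↑(m+1):ℤ) - 2) = (m:ℤ) - 1 := by push_cast; ring
    rw [e, zpow_sub₀ (by norm_num : (2:ℚ) ≠ 0), zpow_natCast, zpow_one]
  have hsub : m + 1 - 1 = m := rfl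
  rw [hL, hsub, h3z, h2z]
  have key : ((m+1)! : ℚ) * (∑ i ∈ range (m+2),
        (3:ℚ)^i * bernoulli i / i ! * (2^(m+1-i) * bernoulli (m+1-i) / (m+1-i)!))
      = ((m+1)! : ℚ) / 6 * (6 * ∑ i ∈ range (m+2),
        (3:ℚ)^i * bernoulli i / i ! * (2^(m+1-i) * bernoulli (m+1-i) / (m+1-i)!)) := by
    ring
  rw [key, Bern23.coeffs m, Nat.factorial_succ]
  have h2 := hfac m
  have hm1 : ((m:ℚ) + 1) ≠ 0 := by positivity
  push_cast
  field_simp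
  ring
end

section
/- For every integer n ≥ 2, Σ_{i+j+k=n, i,j,k≥0} (n!/(i!·j!·k!)) · 2^i · 3^j · 5^k · B_i · B_j · B_k = (1/2)(n−1)(n−2)·B_n + 5n(n−2)·B_{n−1} + (9/2 + (15/4)·2^{n−2} + (18/5)·5^{n−2})·n(n−1)·B_{n−2} − (10/3)·n(n−1)·3^{n−2}·B_{n−2}(1/3) + (6/5)·n(n−1)·5^{n−2}·B_{n−2}(2/5) + (6/5)·n(n−1)·5^{n−2}·B_{n−2}(3/5), where B_k denotes the k-th Bernoulli number and B_{n−2}(x) the (n−2)-nd Bernoulli polynomial evaluated at x ∈ ℚ. -/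
open Finset

namespace Bern235

open PowerSeries

noncomputable def Eb : ℚ⟦X⟧ := PowerSeries.exp ℚ
noncomputable def Bb : ℚ⟦X⟧ := bernoulliPowerSeries ℚ
noncomputable def Gb (t : ℚ) : ℚ⟦X⟧ :=
  PowerSeries.mk fun n => Polynomial.aeval t ((1 / n.factorial : ℚ) • Polynomial.bernoulli n)

theorem hB : Bb * (Eb - 1) = X := bernoulliPowerSeries_mul_exp_sub_one ℚ

theorem hGb (t : ℚ) : Gb t * (Eb - 1) = X * rescale t Eb :=
  Polynomial.bernoulli_generating_function t

theorem hE' : d⁄dX ℚ Eb = Eb := by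
  ext n
  rw [PowerSeries.coeff_derivative]
  simp [Eb, PowerSeries.coeff_exp, Nat.factorial_succ]
  field_simp

theorem rescale_exp_nat (k : ℕ) : rescale (k : ℚ) Eb = Eb ^ k :=
  (PowerSeries.exp_pow_eq_rescale_exp k).symm

theorem hresc (a : ℕ) : rescale (a:ℚ) Bb * (Eb ^ a - 1) = (a:ℚ⟦X⟧) * X := by
  have := congrArg (rescale (a:ℚ)) hB
  rw [map_mul, map_sub, map_one, rescale_exp_nat, PowerSeries.rescale_X] at this
  rw [this]
  simp [PowerSeries.C_eq_algebraMap, algebraMap_smul]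

theorem hrescG (a : ℕ) (t : ℚ) :
    rescale (a:ℚ) (Gb t) * (Eb ^ a - 1) = (a:ℚ⟦X⟧) * X * rescale (t * a) Eb := by
  have := congrArg (rescale (a:ℚ)) (hGb t)
  rw [map_mul, map_sub, map_one, rescale_exp_nat, map_mul, PowerSeries.rescale_X,
    PowerSeries.rescale_rescale] at this
  rw [this]
  simp [PowerSeries.C_eq_algebraMap, algebraMap_smul]

theorem hg3 : rescale (3:ℚ) (Gb (1/3)) * (Eb ^ 3 - 1) = 3 * X * Eb := by
  have := hrescG 3 (1/3)
  norm_num at this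
  rw [this]

theorem hg5a : rescale (5:ℚ) (Gb (2/5)) * (Eb ^ 5 - 1) = 5 * X * Eb ^ 2 := by
  have := hrescG 5 (2/5)
  norm_num at this
  rw [this, show (rescale (2:ℚ)) Eb = Eb ^ 2 from by rw [← rescale_exp_nat]; norm_num]

theorem hg5b : rescale (5:ℚ) (Gb (3/5)) * (Eb ^ 5 - 1) = 5 * X * Eb ^ 3 := by
  have := hrescG 5 (3/5)
  norm_num at this
  rw [this, show (rescale (3:ℚ)) Eb = Eb ^ 3 from by rw [← rescale_exp_nat]; norm_num]

theorem hu1 : (d⁄dX ℚ) Bb * (Eb - 1) = 1 - Bb * Eb := by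
  have h := congrArg (d⁄dX ℚ) hB
  rw [Derivation.leibniz, map_sub, hE', PowerSeries.derivative_X] at h
  have h1 : (d⁄dX ℚ) (1 : ℚ⟦X⟧) = 0 := Derivation.map_one_eq_zero _
  rw [h1, sub_zero, smul_eq_mul, smul_eq_mul] at h
  linear_combination h

theorem hu2 : (d⁄dX ℚ) Bb * (Eb - 1) ^ 2 = (Eb - 1) - X * Eb := by
  linear_combination (Eb - 1) * hu1 - Eb * hB

theorem hu3 : (d⁄dX ℚ) ((d⁄dX ℚ) Bb) * (Eb - 1) ^ 3
    = - X * Eb * (Eb - 1) - 2 * Eb * (Eb - 1) + 2 * X * Eb ^ 2 := by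
  have h := congrArg (d⁄dX ℚ) hu1
  rw [Derivation.leibniz, map_sub, map_sub, hE', Derivation.leibniz, hE',
    smul_eq_mul, smul_eq_mul, smul_eq_mul, smul_eq_mul] at h
  have h1 : (d⁄dX ℚ) (1 : ℚ⟦X⟧) = 0 := Derivation.map_one_eq_zero _
  rw [h1, sub_zero, zero_sub] at h
  linear_combination (Eb - 1) ^ 2 * h - Eb * (Eb - 1) * hB - 2 * Eb * hu2

theorem h2 : rescale (2:ℚ) Bb * (Eb ^ 2 - 1) = 2 * X := by
  have := hresc 2; push_cast at this; exact this

theorem h3 : rescale (3:ℚ) Bb * (Eb ^ 3 - 1) = 3 * X := by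
  have := hresc 3; push_cast at this; exact this

theorem h5 : rescale (5:ℚ) Bb * (Eb ^ 5 - 1) = 5 * X := by
  have := hresc 5; push_cast at this; exact this

theorem hEne (a : ℕ) (ha : 0 < a) : Eb ^ a - 1 ≠ 0 := by
  intro h
  have h1 := congrArg (coeff (R := ℚ) 1) h
  rw [← rescale_exp_nat] at h1
  simp [PowerSeries.coeff_rescale, Eb, PowerSeries.coeff_exp,
    PowerSeries.coeff_one] at h1
  exact absurd h1 (by positivity)

theorem main : 60 * (rescale (2:ℚ) Bb * (rescale (3:ℚ) Bb * rescale (5:ℚ) Bb)) =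
    30 * (X ^ 2 * (d⁄dX ℚ) ((d⁄dX ℚ) Bb) - 2 * X * (d⁄dX ℚ) Bb + 2 * Bb)
    + 300 * (X ^ 2 * (d⁄dX ℚ) Bb - X * Bb)
    + X ^ 2 * (270 * Bb + 225 * rescale (2:ℚ) Bb + 216 * rescale (5:ℚ) Bb)
    - 200 * X ^ 2 * rescale (3:ℚ) (Gb (1/3))
    + 72 * X ^ 2 * rescale (5:ℚ) (Gb (2/5))
    + 72 * X ^ 2 * rescale (5:ℚ) (Gb (3/5)) := by
  have hD : (Eb ^ 2 - 1) * ((Eb ^ 3 - 1) * (Eb ^ 5 - 1)) ≠ 0 :=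
    mul_ne_zero (hEne 2 (by norm_num))
      (mul_ne_zero (hEne 3 (by norm_num)) (hEne 5 (by norm_num)))
  apply mul_right_cancel₀ hD
  linear_combination
    (60 * rescale (3:ℚ) Bb * rescale (5:ℚ) Bb * (Eb^3-1)*(Eb^5-1)) * h2
    + (60 * (2*X) * rescale (5:ℚ) Bb * (Eb^5-1)) * h3
    + (60 * (2*X) * (3*X)) * h5
    - (30*X^2*((Eb+1)*(Eb^2+Eb+1)*(Eb^4+Eb^3+Eb^2+Eb+1))) * hu3
    - ((300*X^2 - 60*X)*(Eb-1)*((Eb+1)*(Eb^2+Eb+1)*(Eb^4+Eb^3+Eb^2+Eb+1))) * hu2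
    - ((60 - 300*X + 270*X^2)*(Eb-1)^2*((Eb+1)*(Eb^2+Eb+1)*(Eb^4+Eb^3+Eb^2+Eb+1))) * hB
    - (225*X^2*(Eb^3-1)*(Eb^5-1)) * h2
    - (216*X^2*(Eb^2-1)*(Eb^3-1)) * h5
    + (200*X^2*(Eb^2-1)*(Eb^5-1)) * hg3
    - (72*X^2*(Eb^2-1)*(Eb^3-1)) * hg5a
    - (72*X^2*(Eb^2-1)*(Eb^3-1)) * hg5b

theorem main' : 60 * (rescale (2:ℚ) Bb * (rescale (3:ℚ) Bb * rescale (5:ℚ) Bb)) =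
    30 * (X ^ 2 * (d⁄dX ℚ) ((d⁄dX ℚ) Bb)) - 60 * (X * (d⁄dX ℚ) Bb) + 60 * Bb
    + 300 * (X ^ 2 * (d⁄dX ℚ) Bb) - 300 * (X * Bb) + 270 * (X ^ 2 * Bb)
    + 225 * (X ^ 2 * rescale (2:ℚ) Bb) + 216 * (X ^ 2 * rescale (5:ℚ) Bb)
    - 200 * (X ^ 2 * rescale (3:ℚ) (Gb (1/3)))
    + 72 * (X ^ 2 * rescale (5:ℚ) (Gb (2/5)))
    + 72 * (X ^ 2 * rescale (5:ℚ) (Gb (3/5))) := by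
  rw [main]; ring

theorem main'' : C (R := ℚ) 60 * (rescale (2:ℚ) Bb * (rescale (3:ℚ) Bb * rescale (5:ℚ) Bb)) =
    C (R := ℚ) 30 * (X ^ 2 * (d⁄dX ℚ) ((d⁄dX ℚ) Bb)) - C (R := ℚ) 60 * (X * (d⁄dX ℚ) Bb) + C (R := ℚ) 60 * Bb
    + C (R := ℚ) 300 * (X ^ 2 * (d⁄dX ℚ) Bb) - C (R := ℚ) 300 * (X * Bb) + C (R := ℚ) 270 * (X ^ 2 * Bb)
    + C (R := ℚ) 225 * (X ^ 2 * rescale (2:ℚ) Bb) + C (R := ℚ) 216 * (X ^ 2 * rescale (5:ℚ) Bb)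
    - C (R := ℚ) 200 * (X ^ 2 * rescale (3:ℚ) (Gb (1/3)))
    + C (R := ℚ) 72 * (X ^ 2 * rescale (5:ℚ) (Gb (2/5)))
    + C (R := ℚ) 72 * (X ^ 2 * rescale (5:ℚ) (Gb (3/5))) := by
  simp only [map_ofNat]
  exact main'

theorem coeff_Bb (k : ℕ) : coeff (R := ℚ) k Bb = bernoulli k / k.factorial := by
  simp [Bb, bernoulliPowerSeries]

theorem coeff_Gb (t : ℚ) (k : ℕ) :
    coeff (R := ℚ) k (Gb t) = (Polynomial.bernoulli k).eval t / k.factorial := by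
  rw [Gb, PowerSeries.coeff_mk, map_smul, smul_eq_mul,
    congrFun (Polynomial.coe_aeval_eq_eval t) (Polynomial.bernoulli k)]
  ring

end Bern235

open Bern235 PowerSeries

/-- For every integer `n ≥ 2`,
`∑_{i+j+k=n} (n!/(i!·j!·k!)) · 2^i·3^j·5^k · B_i·B_j·B_k
  = (1/2)(n−1)(n−2)·B_n + 5n(n−2)·B_{n−1}
    + (9/2 + (15/4)·2^{n−2} + (18/5)·5^{n−2})·n(n−1)·B_{n−2}
    − (10/3)·n(n−1)·3^{n−2}·B_{n−2}(1/3)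
    + (6/5)·n(n−1)·5^{n−2}·B_{n−2}(2/5) + (6/5)·n(n−1)·5^{n−2}·B_{n−2}(3/5)`. -/
theorem bernoulli_235_identity (n : ℕ) (hn : 2 ≤ n) :
    ∑ i ∈ range (n + 1), ∑ j ∈ range (n - i + 1),
        ((n.factorial : ℚ) / ((i.factorial : ℚ) * (j.factorial : ℚ) *
            ((n - i - j).factorial : ℚ))) *
          (2 : ℚ) ^ i * (3 : ℚ) ^ j * (5 : ℚ) ^ (n - i - j) *
          bernoulli i * bernoulli j * bernoulli (n - i - j) =
      (1 / 2) * ((n : ℚ) - 1) * ((n : ℚ) - 2) * bernoulli n +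
        5 * (n : ℚ) * ((n : ℚ) - 2) * bernoulli (n - 1) +
        (9 / 2 + (15 / 4) * (2 : ℚ) ^ (n - 2) + (18 / 5) * (5 : ℚ) ^ (n - 2)) *
          (n : ℚ) * ((n : ℚ) - 1) * bernoulli (n - 2) -
        (10 / 3) * (n : ℚ) * ((n : ℚ) - 1) * (3 : ℚ) ^ (n - 2) *
          (Polynomial.bernoulli (n - 2)).eval (1 / 3 : ℚ) +
        (6 / 5) * (n : ℚ) * ((n : ℚ) - 1) * (5 : ℚ) ^ (n - 2) *
          (Polynomial.bernoulli (n - 2)).eval (2 / 5 : ℚ) +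
        (6 / 5) * (n : ℚ) * ((n : ℚ) - 1) * (5 : ℚ) ^ (n - 2) *
          (Polynomial.bernoulli (n - 2)).eval (3 / 5 : ℚ) := by

  obtain ⟨m, rfl⟩ : ∃ m, n = m + 2 := ⟨n - 2, by omega⟩
  -- clean up ℕ subtractions in the goal
  rw [show m + 2 - 1 = m + 1 from rfl, show m + 2 - 2 = m from rfl]
  -- extract the (m+2)-th coefficient of the power series identity
  have hX1 : ∀ f : ℚ⟦X⟧, coeff (R := ℚ) (m+2) (X * f) = coeff (R := ℚ) (m+1) f := fun f =>
    PowerSeries.coeff_succ_X_mul (m+1) f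
  have hkey := congrArg (coeff (R := ℚ) (m + 2)) main''
  simp only [map_add, map_sub, PowerSeries.coeff_C_mul, PowerSeries.coeff_X_pow_mul, hX1,
    PowerSeries.coeff_derivative, PowerSeries.coeff_rescale, coeff_Bb, coeff_Gb] at hkey
  -- rewrite the LHS double sum as (m+2)! times the coefficient of the product
  have hLc : (∑ i ∈ range (m + 2 + 1), ∑ j ∈ range (m + 2 - i + 1),
        (((m+2).factorial : ℚ) / ((i.factorial : ℚ) * (j.factorial : ℚ) *
            ((m + 2 - i - j).factorial : ℚ))) *
          (2 : ℚ) ^ i * (3 : ℚ) ^ j * (5 : ℚ) ^ (m + 2 - i - j) *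
          bernoulli i * bernoulli j * bernoulli (m + 2 - i - j))
      = ((m+2).factorial : ℚ) *
        coeff (R := ℚ) (m+2) (rescale (2:ℚ) Bb * (rescale (3:ℚ) Bb * rescale (5:ℚ) Bb)) := by
    rw [PowerSeries.coeff_mul, Nat.sum_antidiagonal_eq_sum_range_succ_mk, Finset.mul_sum]
    refine Finset.sum_congr rfl fun i _ => ?_
    rw [PowerSeries.coeff_mul, Nat.sum_antidiagonal_eq_sum_range_succ_mk, Finset.mul_sum,
      Finset.mul_sum]
    refine Finset.sum_congr rfl fun j _ => ?_
    rw [PowerSeries.coeff_rescale, PowerSeries.coeff_rescale, PowerSeries.coeff_rescale,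
      coeff_Bb, coeff_Bb, coeff_Bb]
    ring
  rw [show m+1+1 = m+2 from rfl] at hkey
  push_cast at hkey
  rw [hLc]
  have hfact2 : (((m+2).factorial : ℕ) : ℚ) = ((m:ℚ)+2) * ((m:ℚ)+1) * (m.factorial : ℚ) := by
    push_cast [Nat.factorial_succ]
    ring
  have hfact1 : (((m+1).factorial : ℕ) : ℚ) = ((m:ℚ)+1) * (m.factorial : ℚ) := by
    push_cast [Nat.factorial_succ]
    ring
  have hm : (m.factorial : ℚ) ≠ 0 := Nat.cast_ne_zero.mpr m.factorial_ne_zero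
  have h1 : ((m:ℚ)+1) ≠ 0 := by positivity
  have h2 : ((m:ℚ)+2) ≠ 0 := by positivity
  apply mul_left_cancel₀ (show (60:ℚ) ≠ 0 by norm_num)
  rw [mul_left_comm, hkey, hfact2, hfact1]
  push_cast
  field_simp
  ring
end

section
/- Kaneko's identity: for every non-negative integer k, Σ_{j=0}^{k+1} C(k+1, j) · (k+j+1) · B_{k+j} = 0, where B_m denotes the m-th Bernoulli number and C(k+1,j) the binomial coefficient. -/
open Finset

private def kanF (m n : ℕ) : ℚ := ∑ j ∈ range (m + 1), (m.choose j : ℚ) * bernoulli (n + j)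

private lemma kanF_pascal (m n : ℕ) : kanF (m + 1) n = kanF m n + kanF m (n + 1) := by
  have h1 : kanF (m + 1) n
      = ((m+1).choose 0 : ℚ) * bernoulli (n + 0)
        + ∑ i ∈ range (m + 1), ((m+1).choose (i+1) : ℚ) * bernoulli (n + (i+1)) := by
    rw [kanF, sum_range_succ' _ (m + 1)]; ring
  have h2 : ∀ i : ℕ, ((m+1).choose (i+1) : ℚ) = (m.choose i : ℚ) + (m.choose (i+1) : ℚ) := by
    intro i
    rw [Nat.choose_succ_succ]
    push_cast; ring
  rw [h1]
  simp_rw [h2, add_mul, Finset.sum_add_distrib]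
  have h3 : ∑ i ∈ range (m + 1), (m.choose i : ℚ) * bernoulli (n + (i+1))
      = kanF m (n + 1) := by
    rw [kanF]
    apply Finset.sum_congr rfl
    intro i _
    congr 2
    omega
  have h4 : ((m+1).choose 0 : ℚ) * bernoulli (n + 0)
      + ∑ i ∈ range (m + 1), (m.choose (i+1) : ℚ) * bernoulli (n + (i+1)) = kanF m n := by
    have h5 : kanF m n + (m.choose (m+1) : ℚ) * bernoulli (n + (m+1))
        = ((m).choose 0 : ℚ) * bernoulli (n + 0)
          + ∑ i ∈ range (m + 1), (m.choose (i+1) : ℚ) * bernoulli (n + (i+1)) := by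
      rw [kanF, ← sum_range_succ, sum_range_succ' _ (m + 1)]; ring
    rw [Nat.choose_succ_self] at h5
    simp only [Nat.cast_zero, zero_mul, add_zero] at h5
    rw [h5]
    norm_num
  rw [h3, ← h4]
  ring

private lemma kanF_base (n : ℕ) : kanF n 0 = (-1 : ℚ) ^ n * bernoulli n := by
  have h : kanF n 0 = (∑ j ∈ range n, (n.choose j : ℚ) * bernoulli j) + bernoulli n := by
    rw [kanF, sum_range_succ]
    simp
  rw [h, sum_bernoulli]
  rcases eq_or_ne n 1 with h1 | h1
  · subst h1; rw [bernoulli_one]; norm_num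
  · rw [if_neg h1, zero_add]
    rcases Nat.even_or_odd n with he | ho
    · rw [he.neg_one_pow, one_mul]
    · rcases eq_or_ne n 1 with h2 | h2
      · exact absurd h2 h1
      · have hn1 : 1 < n := by
          rcases Nat.lt_or_ge n 2 with h | h
          · interval_cases n
            · exact absurd ho (by simp)
            · exact absurd rfl h1
          · omega
        have : bernoulli n = 0 := by
          rw [bernoulli_eq_bernoulli'_of_ne_one h1]
          exact bernoulli'_eq_zero_of_odd ho hn1
        simp [this]

private lemma kanF_symm (m : ℕ) : ∀ n, kanF m n = (-1 : ℚ) ^ (m + n) * kanF n m := by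
  induction m with
  | zero =>
    intro n
    have h0 : kanF 0 n = bernoulli n := by simp [kanF]
    rw [h0, kanF_base, zero_add, ← mul_assoc, ← pow_add]
    simp [pow_add, pow_mul_comm, ← two_mul, pow_mul]
  | succ m ih =>
    intro n
    rw [kanF_pascal, ih n, ih (n+1)]
    have hpn : kanF (n+1) m = kanF n m + kanF n (m+1) := kanF_pascal n m
    have : kanF n (m + 1) = kanF (n + 1) m - kanF n m := by rw [hpn]; ring
    rw [this]
    rw [show (-1:ℚ)^(m + (n+1)) = -(-1:ℚ)^(m+n) by rw [show m + (n+1) = (m+n)+1 by omega, pow_succ]; ring,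
        show (m+1) + n = (m+n)+1 by omega, pow_succ]
    ring

/-- Kaneko's identity: for every `k ≥ 0`,
`∑_{j=0}^{k+1} C(k+1,j) · (k+j+1) · B_{k+j} = 0`. -/
theorem kaneko_identity (k : ℕ) :
    ∑ j ∈ range (k + 2), ((k + 1).choose j : ℚ) * ((k : ℚ) + (j : ℚ) + 1) *
        bernoulli (k + j) = 0 := by
  -- key identity:  (k+1-j) * C(k+1,j) = (k+1) * C(k,j)  in ℚ for j ≤ k+1
  have hkey : ∀ j ∈ range (k + 2),
      ((k + 1).choose j : ℚ) * ((k : ℚ) + (j : ℚ) + 1)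
        = (2 * (k : ℚ) + 2) * ((k + 1).choose j : ℚ) - ((k : ℚ) + 1) * (k.choose j : ℚ) := by
    intro j hj
    have hj' : j ≤ k + 1 := by simpa [Nat.lt_succ_iff] using mem_range.mp hj
    have hnat : (k + 1) * k.choose j = (k + 1).choose j * (k + 1 - j) := by
      rw [← Nat.choose_succ_right_eq, Nat.add_one_mul_choose_eq]
    have hq : ((k : ℚ) + 1) * (k.choose j : ℚ)
        = ((k + 1).choose j : ℚ) * ((k : ℚ) + 1 - (j : ℚ)) := by
      have := congrArg (fun x : ℕ => (x : ℚ)) hnat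
      push_cast [Nat.cast_sub hj'] at this
      convert this using 2
    rw [hq]; ring
  rw [Finset.sum_congr rfl (fun j hj => by rw [hkey j hj])]
  simp_rw [sub_mul, Finset.sum_sub_distrib, mul_assoc, ← Finset.mul_sum]
  have hA : ∑ j ∈ range (k + 2), ((k + 1).choose j : ℚ) * bernoulli (k + j) = kanF (k+1) k := by
    rw [kanF]
  have hB : ∑ j ∈ range (k + 2), (k.choose j : ℚ) * bernoulli (k + j) = kanF k k := by
    rw [kanF, sum_range_succ]
    simp
  rw [hA, hB]
  -- 2 * kanF (k+1) k = kanF k k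
  have hsym : kanF (k+1) k = - kanF k (k+1) := by
    rw [kanF_symm (k+1) k, show (k+1)+k = 2*k+1 by omega, pow_succ, pow_mul]
    simp
  have hpas : kanF (k+1) k = kanF k k + kanF k (k+1) := kanF_pascal k k
  have h2 : kanF k k = 2 * kanF (k+1) k := by
    have := hpas
    rw [show kanF k (k+1) = - kanF (k+1) k by linarith [hsym]] at this
    linarith
  rw [h2]
  ring
end

section
/- For every real number s, the following identity of formal power series holds in ℝ[[T]]: 𝐁(sT) · 𝐁((1−s)T) = (1−s) · (𝐁(sT) + (s/2)·T) · 𝐁 + s · (𝐁((1−s)T) + ((1−s)/2)·T) · 𝐁. -/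
open PowerSeries

private lemma crabb_aux {R : Type*} [CommRing R] (Bs B1s B u v x c d : R)
    (h1 : Bs * (u - 1) = 2 * c * x) (h2 : B1s * (v - 1) = 2 * d * x)
    (h3 : B * (u * v - 1) = x) :
    Bs * B1s * ((u - 1) * (v - 1) * (u * v - 1)) =
      (2 * d * (Bs + c * x) * B + 2 * c * (B1s + d * x) * B) *
        ((u - 1) * (v - 1) * (u * v - 1)) := by
  linear_combination (B1s * (v - 1) * (u * v - 1) - 2 * d * (v - 1) * B * (u * v - 1)) * h1 +
    (2 * c * x * (u * v - 1) - 2 * c * (u - 1) * B * (u * v - 1)) * h2 -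
    (4 * c * d * x * (u * v - 1)) * h3

/-- For every real number `s`, in `ℝ[[T]]` :
`𝐁(sT)·𝐁((1−s)T) = (1−s)·(𝐁(sT) + (s/2)·T)·𝐁 + s·(𝐁((1−s)T) + ((1−s)/2)·T)·𝐁`. -/
theorem crabb_relation (s : ℝ) :
    rescale s (bernoulliPowerSeries ℝ) * rescale (1 - s) (bernoulliPowerSeries ℝ) =
      C (R := ℝ) (1 - s) * (rescale s (bernoulliPowerSeries ℝ) + C (R := ℝ) (s / 2) * X) *
          bernoulliPowerSeries ℝ +
        C (R := ℝ) s * (rescale (1 - s) (bernoulliPowerSeries ℝ) + C (R := ℝ) ((1 - s) / 2) * X) *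
          bernoulliPowerSeries ℝ := by
  have hB0 : constantCoeff (R := ℝ) (bernoulliPowerSeries ℝ) = 1 := by
    simp [bernoulliPowerSeries, coeff_mk, ← coeff_zero_eq_constantCoeff]
  rcases eq_or_ne s 0 with rfl | hs0
  · simp [rescale_zero, hB0]
  rcases eq_or_ne s 1 with rfl | hs1
  · simp [rescale_zero, rescale_one, hB0]
  -- relations
  set Bs := rescale s (bernoulliPowerSeries ℝ)
  set B1s := rescale (1 - s) (bernoulliPowerSeries ℝ)
  set u := rescale s (exp ℝ)
  set v := rescale (1 - s) (exp ℝ)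
  have huv : u * v = exp ℝ := by
    rw [exp_mul_exp_eq_exp_add]
    simp [rescale_one]
  have hC2 : C (R := ℝ) 2 = 2 := map_ofNat _ 2
  have hCs : C (R := ℝ) s = 2 * C (R := ℝ) (s / 2) := by
    rw [← hC2, ← map_mul (C (R := ℝ)) 2 (s / 2), show 2 * (s / 2) = s by ring]
  have hC1s : C (R := ℝ) (1 - s) = 2 * C (R := ℝ) ((1 - s) / 2) := by
    rw [← hC2, ← map_mul (C (R := ℝ)) 2 ((1 - s) / 2), show 2 * ((1 - s) / 2) = 1 - s by ring]
  have h1 : Bs * (u - 1) = 2 * C (R := ℝ) (s / 2) * X := by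
    have := congrArg (rescale s) (bernoulliPowerSeries_mul_exp_sub_one ℝ)
    rw [map_mul, map_sub, map_one, rescale_X] at this
    rw [this, hCs]
  have h2 : B1s * (v - 1) = 2 * C (R := ℝ) ((1 - s) / 2) * X := by
    have := congrArg (rescale (1 - s)) (bernoulliPowerSeries_mul_exp_sub_one ℝ)
    rw [map_mul, map_sub, map_one, rescale_X] at this
    rw [this, hC1s]
  have h3 : bernoulliPowerSeries ℝ * (u * v - 1) = X := by
    rw [huv]; exact bernoulliPowerSeries_mul_exp_sub_one ℝ
  have key := crabb_aux Bs B1s (bernoulliPowerSeries ℝ) u v X (C (R := ℝ) (s / 2)) (C (R := ℝ) ((1 - s) / 2))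
    h1 h2 h3
  have cexp : ∀ a : ℝ, (coeff (R := ℝ) 1) (rescale a (exp ℝ) - 1) = a := by
    intro a
    simp [coeff_rescale, exp, coeff_mk]
  have hne : (u - 1) * (v - 1) * (u * v - 1) ≠ 0 := by
    intro h
    rcases mul_eq_zero.mp h with h | h
    · rcases mul_eq_zero.mp h with h | h
      · have h' := congrArg (coeff (R := ℝ) 1) h
        rw [cexp s] at h'
        simp at h'
        exact hs0 h'
      · have h' := congrArg (coeff (R := ℝ) 1) h
        rw [cexp (1 - s)] at h'
        simp at h'
        exact hs1 (by linarith)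
    · rw [huv] at h
      have h' := congrArg (coeff (R := ℝ) 1) h
      simp [exp, coeff_mk] at h'
  have := mul_right_cancel₀ hne key
  rw [hCs, hC1s]
  exact this
end
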